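/- arXiv:2201.13302 — 3 statements merged into one kernel-verified Lean document; each statement's English description precedes it below -/
import Mathlib

section
/- Join commutes with valuations on symbolic tables: if R : K₁ ▷ V₁ and S : K₂ ▷ V₂ are s-tables over variable set X with V₁ ∩ V₂ = ∅ (and value attributes of one disjoint from the attributes of the other except for shared key attributes), and h : X → ℝ is a valuation, then h(R) ⋈ h(S) = h(R ⋈ S). -/
/-! A valuation `h` acts on an s-table value by value, through `eval h`, which is surjective
(constants evaluate to themselves). Evaluating a join is always contained in the join of the
evaluations. Conversely, a tuple of `h(R) ⋈ h(S)` built from `r ∈ R` and `s ∈ S` lifts to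
`R ⋈ S` by taking the values of `r` on `V₁`, those of `s` on `V₂` (consistent since
`V₁ ∩ V₂ = ∅`), and arbitrary preimages on the attributes the join leaves unconstrained. -/

open MvPolynomial

/-- The join of two tables over attributes: keys agree with the respective
sources on `K₁` resp. `K₂`, values agree with the respective sources on `V₁`
resp. `V₂`. -/
def joinTable {A D E : Type*} (K₁ K₂ V₁ V₂ : Set A)
    (R S : Set ((A → D) × (A → E))) : Set ((A → D) × (A → E)) :=
  {t | ∃ r ∈ R, ∃ s ∈ S,
    (∀ a ∈ K₁, t.1 a = r.1 a) ∧ (∀ a ∈ K₂, t.1 a = s.1 a) ∧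
    (∀ a ∈ V₁, t.2 a = r.2 a) ∧ (∀ a ∈ V₂, t.2 a = s.2 a)}

open Set Function

section MapValues

variable {A D E F : Type*}

def mapValues (f : E → F) (t : (A → D) × (A → E)) : (A → D) × (A → F) :=
  (t.1, f ∘ t.2)

theorem exists_comp_eq_eqOn_eqOn {f : E → F} (hf : Surjective f) {V₁ V₂ : Set A}
    (hV : Disjoint V₁ V₂) {r s : A → E} {t : A → F}
    (hr : EqOn t (f ∘ r) V₁) (hs : EqOn t (f ∘ s) V₂) :
    ∃ u : A → E, f ∘ u = t ∧ EqOn u r V₁ ∧ EqOn u s V₂ := by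
  classical
  refine ⟨V₁.piecewise r (V₂.piecewise s (surjInv hf ∘ t)), ?_, V₁.piecewise_eqOn _ _,
    fun a ha₂ => ?_⟩
  · funext a
    by_cases ha₁ : a ∈ V₁
    · simp [ha₁, hr ha₁]
    by_cases ha₂ : a ∈ V₂
    · simp [ha₁, ha₂, hs ha₂]
    · simp [ha₁, ha₂, surjInv_eq hf]
  · simp [hV.notMem_of_mem_right ha₂, ha₂]

theorem image_mapValues_joinTable_subset (f : E → F) (K₁ K₂ V₁ V₂ : Set A)
    (R S : Set ((A → D) × (A → E))) :
    mapValues f '' joinTable K₁ K₂ V₁ V₂ R S ⊆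
      joinTable K₁ K₂ V₁ V₂ (mapValues f '' R) (mapValues f '' S) := by
  rintro _ ⟨u, ⟨r, hr, s, hs, hK₁, hK₂, hV₁, hV₂⟩, rfl⟩
  exact ⟨_, mem_image_of_mem _ hr, _, mem_image_of_mem _ hs, hK₁, hK₂,
    fun a ha => congrArg f (hV₁ a ha), fun a ha => congrArg f (hV₂ a ha)⟩

theorem joinTable_image_mapValues_subset {f : E → F} (hf : Surjective f) (K₁ K₂ : Set A)
    {V₁ V₂ : Set A} (hV : Disjoint V₁ V₂) (R S : Set ((A → D) × (A → E))) :
    joinTable K₁ K₂ V₁ V₂ (mapValues f '' R) (mapValues f '' S) ⊆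
      mapValues f '' joinTable K₁ K₂ V₁ V₂ R S := by
  rintro t ⟨_, ⟨r, hr, rfl⟩, _, ⟨s, hs, rfl⟩, hK₁, hK₂, hV₁, hV₂⟩
  obtain ⟨u, hu, hur, hus⟩ := exists_comp_eq_eqOn_eqOn hf hV hV₁ hV₂
  exact ⟨(t.1, u), ⟨r, hr, s, hs, hK₁, hK₂, hur, hus⟩, by rw [mapValues, hu]⟩

theorem joinTable_image_mapValues {f : E → F} (hf : Surjective f) (K₁ K₂ : Set A)
    {V₁ V₂ : Set A} (hV : Disjoint V₁ V₂) (R S : Set ((A → D) × (A → E))) :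
    joinTable K₁ K₂ V₁ V₂ (mapValues f '' R) (mapValues f '' S) =
      mapValues f '' joinTable K₁ K₂ V₁ V₂ R S :=
  (joinTable_image_mapValues_subset hf K₁ K₂ hV R S).antisymm
    (image_mapValues_joinTable_subset f K₁ K₂ V₁ V₂ R S)

end MapValues

theorem join_commutes_with_valuation_general
    {A D X : Type*} (K₁ V₁ K₂ V₂ : Set A)
    (R S : Set ((A → D) × (A → MvPolynomial X ℝ)))
    (hVV : Disjoint V₁ V₂)
    (h : X → ℝ) :
    joinTable K₁ K₂ V₁ V₂
        ((fun t : (A → D) × (A → MvPolynomial X ℝ) =>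
            (t.1, fun a => eval h (t.2 a))) '' R)
        ((fun t : (A → D) × (A → MvPolynomial X ℝ) =>
            (t.1, fun a => eval h (t.2 a))) '' S)
      = (fun t : (A → D) × (A → MvPolynomial X ℝ) =>
            (t.1, fun a => eval h (t.2 a))) '' joinTable K₁ K₂ V₁ V₂ R S :=
  joinTable_image_mapValues (fun x => ⟨C x, eval_C x⟩) K₁ K₂ hVV R S

/-- join commutes with valuations on s-tables `R : K₁ ▷ V₁`,
`S : K₂ ▷ V₂` over variables `X`, provided `V₁ ∩ V₂ = ∅` and the value
attributes of each table are disjoint from the attributes of the other: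
`h(R) ⋈ h(S) = h(R ⋈ S)`. -/
theorem join_commutes_with_valuation
    {A D X : Type*} (K₁ V₁ K₂ V₂ : Set A)
    (R S : Set ((A → D) × (A → MvPolynomial X ℝ)))
    (hVV : Disjoint V₁ V₂) (hV₁K₂ : Disjoint V₁ K₂) (hV₂K₁ : Disjoint V₂ K₁)
    (hR : ∀ t ∈ R, ∀ t' ∈ R, (∀ a ∈ K₁, t.1 a = t'.1 a) → ∀ a ∈ V₁, t.2 a = t'.2 a)
    (hS : ∀ t ∈ S, ∀ t' ∈ S, (∀ a ∈ K₂, t.1 a = t'.1 a) → ∀ a ∈ V₂, t.2 a = t'.2 a)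
    (h : X → ℝ) :
    joinTable K₁ K₂ V₁ V₂
        ((fun t : (A → D) × (A → MvPolynomial X ℝ) =>
            (t.1, fun a => eval h (t.2 a))) '' R)
        ((fun t : (A → D) × (A → MvPolynomial X ℝ) =>
            (t.1, fun a => eval h (t.2 a))) '' S)
      = (fun t : (A → D) × (A → MvPolynomial X ℝ) =>
            (t.1, fun a => eval h (t.2 a))) '' joinTable K₁ K₂ V₁ V₂ R S :=
  join_commutes_with_valuation_general K₁ V₁ K₂ V₂ R S hVV h
end

section
/- For any well-formed query q built from selection (on keys only), projection-away (of values only), join (overlapping on keys only), discriminated union, difference (on keys), renaming, derivation, and grouping/sum aggregation, and any s-instance I over variable set X with globally scoped variables, the set of ground query results over all valuations equals the set of groundings of the symbolic result: q⟦I⟧ = ⟦q(I)⟧, where ⟦I⟧ = { h(I) | h : X → ℝ } and q⟦I⟧ = { q(J) | J ∈ ⟦I⟧ }. -/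
/-!
Grounding by a valuation `h` applies the `ℝ`-algebra map `aeval h : ℝ[X] → ℝ` to every value
and leaves keys alone. Selection, difference and joins only inspect keys, and projection,
renaming, union and derivation combine values by ring operations, so each of them commutes
with any `ℝ`-algebra map applied to values. Aggregation sums values over groups; the sum
commutes with grounding because the tables are finite and, by well-formedness, keyed, so
grounding (which keeps keys) identifies no two tuples of a group. Hence `q(h(I)) = h(q(I))`
for every `h`, and the two sets of tables coincide.
-/

open scoped Classical

namespace Eris

/-- A table over key values `D` and value entries `E`: a set of tuples, each a
pair of a ground key assignment and a value assignment. -/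
abbrev Table (A D E : Type*) := Set ((A → D) × (A → E))

/-- Deep embedding of the query language over finite maps: selection on keys,
projection-away of values, join overlapping only on keys, discriminated union,
difference on keys, renaming, derivation, and grouping/sum aggregation.
Constructors carry the attribute-set annotations needed by the semantics. -/
inductive Query (A D Rl : Type*) where
  | rel : Rl → Query A D Rl
  | sel : ((A → D) → Prop) → Query A D Rl → Query A D Rl
  | proj : Set A → Query A D Rl → Query A D Rl
  | join : Set A → Set A → Set A → Query A D Rl → Query A D Rl → Query A D Rl
  | dunion : A → D → D → Query A D Rl → Query A D Rl → Query A D Rl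
  | diff : Set A → Query A D Rl → Query A D Rl → Query A D Rl
  | ren : A ≃ A → Query A D Rl → Query A D Rl
  | derive : A → MvPolynomial A ℝ → Query A D Rl → Query A D Rl
  | agg : Set A → Set A → Query A D Rl → Query A D Rl

variable {A D X Rl : Type*}

/-- Semantics of queries over an instance `I`, polymorphic in the value ring
`E` (an `ℝ`-algebra), so that the same semantics covers ground tables
(`E = ℝ`) and symbolic tables (`E = MvPolynomial X ℝ`). -/
noncomputable def sem [Inhabited D] {E : Type*} [CommRing E] [Algebra ℝ E]
    (I : Rl → Table A D E) : Query A D Rl → Table A D E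
  | .rel r => I r
  | .sel c q => {t ∈ sem I q | c t.1}
  | .proj W q =>
      (fun t : (A → D) × (A → E) =>
        (t.1, fun a => if a ∈ W then 0 else t.2 a)) '' sem I q
  | .join K₁ K₂ V₁ q₁ q₂ =>
      {u | ∃ r ∈ sem I q₁, ∃ s ∈ sem I q₂,
        (∀ a, a ∈ K₁ → a ∈ K₂ → r.1 a = s.1 a) ∧
        u = ((fun a => if a ∈ K₁ then r.1 a else s.1 a),
             fun a => if a ∈ V₁ then r.2 a else s.2 a)}
  | .dunion B d₀ d₁ q₁ q₂ =>
      (fun t : (A → D) × (A → E) => (Function.update t.1 B d₀, t.2)) '' sem I q₁ ∪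
      (fun t : (A → D) × (A → E) => (Function.update t.1 B d₁, t.2)) '' sem I q₂
  | .diff K q₁ q₂ =>
      {t ∈ sem I q₁ | ¬ ∃ s ∈ sem I q₂, ∀ a ∈ K, t.1 a = s.1 a}
  | .ren σ q =>
      (fun t : (A → D) × (A → E) => (t.1 ∘ σ, t.2 ∘ σ)) '' sem I q
  | .derive B e q =>
      (fun t : (A → D) × (A → E) =>
        (t.1, Function.update t.2 B (MvPolynomial.aeval t.2 e))) '' sem I q
  | .agg K' V' q =>
      {p | ∃ t ∈ sem I q,
        p = ((fun a => if a ∈ K' then t.1 a else default),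
             fun a => if a ∈ V' then
               ∑ᶠ s ∈ {s ∈ sem I q | ∀ b ∈ K', s.1 b = t.1 b}, s.2 a
             else 0)}

/-- Well-formedness of a query with respect to a schema `Sch` assigning key and
value attribute sets to each relation name; `WF Sch q K V` means `q : K ▷ V`. -/
inductive WF [DecidableEq A] (Sch : Rl → Set A × Set A) :
    Query A D Rl → Set A → Set A → Prop where
  | rel (r : Rl) : WF Sch (.rel r) (Sch r).1 (Sch r).2
  | sel {q : Query A D Rl} {K V : Set A} {c : (A → D) → Prop} :
      WF Sch q K V →
      (∀ t t' : A → D, (∀ a ∈ K, t a = t' a) → (c t ↔ c t')) →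
      WF Sch (.sel c q) K V
  | proj {q : Query A D Rl} {K V : Set A} (W : Set A) :
      WF Sch q K V → W ⊆ V → WF Sch (.proj W q) K (V \ W)
  | join {q₁ q₂ : Query A D Rl} {K₁ V₁ K₂ V₂ : Set A} :
      WF Sch q₁ K₁ V₁ → WF Sch q₂ K₂ V₂ →
      Disjoint V₁ V₂ → Disjoint V₁ K₂ → Disjoint V₂ K₁ →
      WF Sch (.join K₁ K₂ V₁ q₁ q₂) (K₁ ∪ K₂) (V₁ ∪ V₂)
  | dunion {q₁ q₂ : Query A D Rl} {K V : Set A} (B : A) (d₀ d₁ : D) :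
      WF Sch q₁ K V → WF Sch q₂ K V → B ∉ K ∪ V → d₀ ≠ d₁ →
      WF Sch (.dunion B d₀ d₁ q₁ q₂) (K ∪ {B}) V
  | diff {q₁ q₂ : Query A D Rl} {K V : Set A} :
      WF Sch q₁ K V → WF Sch q₂ K ∅ → WF Sch (.diff K q₁ q₂) K V
  | ren {q : Query A D Rl} {K V : Set A} (σ : A ≃ A) :
      WF Sch q K V → WF Sch (.ren σ q) (σ.symm '' K) (σ.symm '' V)
  | derive {q : Query A D Rl} {K V : Set A} (B : A) (e : MvPolynomial A ℝ) :
      WF Sch q K V → B ∉ K ∪ V → (↑e.vars : Set A) ⊆ V →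
      WF Sch (.derive B e q) K (V ∪ {B})
  | agg {q : Query A D Rl} {K V : Set A} (K' V' : Set A) :
      WF Sch q K V → K' ⊆ K → V' ⊆ V → WF Sch (.agg K' V' q) K' V'

/-- An instance is valid for a schema when each table is finite, satisfies the
functional dependency key → value, and its tuples are supported on the schema
attributes (default/zero outside). -/
def ValidInst [Inhabited D] {E : Type*} [Zero E] (Sch : Rl → Set A × Set A)
    (I : Rl → Table A D E) : Prop :=
  ∀ r : Rl,
    (I r).Finite ∧
    (∀ t ∈ I r, ∀ t' ∈ I r,
      (∀ a ∈ (Sch r).1, t.1 a = t'.1 a) → ∀ a ∈ (Sch r).2, t.2 a = t'.2 a) ∧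
    (∀ t ∈ I r, (∀ a ∉ (Sch r).1, t.1 a = default) ∧ (∀ a ∉ (Sch r).2, t.2 a = 0))

/-- Grounding a symbolic table by a valuation `h : X → ℝ`. -/
noncomputable def gMap (h : X → ℝ) (T : Table A D (MvPolynomial X ℝ)) :
    Table A D ℝ :=
  (fun t : (A → D) × (A → MvPolynomial X ℝ) =>
    (t.1, fun a => MvPolynomial.eval h (t.2 a))) '' T

variable {E E' : Type*}

def Keyed (S : Table A D E) (K : Set A) : Prop :=
  ∀ t ∈ S, ∀ t' ∈ S, (∀ a ∈ K, t.1 a = t'.1 a) → t = t'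

theorem Keyed.mono {S T : Table A D E} {K : Set A} (hS : Keyed S K) (hTS : T ⊆ S) :
    Keyed T K :=
  fun t ht t' ht' hk => hS t (hTS ht) t' (hTS ht') hk

theorem Keyed.image {S : Table A D E} {K K' : Set A}
    {g : (A → D) × (A → E) → (A → D) × (A → E')}
    (hg : ∀ t t', (∀ a ∈ K', (g t).1 a = (g t').1 a) → ∀ a ∈ K, t.1 a = t'.1 a)
    (hS : Keyed S K) : Keyed (g '' S) K' := by
  rintro _ ⟨t, ht, rfl⟩ _ ⟨t', ht', rfl⟩ hk
  rw [hS t ht t' ht' (hg t t' hk)]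

theorem ValidInst.keyed [Inhabited D] [Zero E] {Sch : Rl → Set A × Set A}
    {I : Rl → Table A D E} (hI : ValidInst Sch I) (r : Rl) : Keyed (I r) (Sch r).1 := by
  obtain ⟨-, hfd, hsupp⟩ := hI r
  intro t ht t' ht' hkey
  refine Prod.ext (funext fun a => ?_) (funext fun a => ?_)
  · by_cases hk : a ∈ (Sch r).1
    · exact hkey a hk
    · rw [(hsupp t ht).1 a hk, (hsupp t' ht').1 a hk]
  · by_cases hv : a ∈ (Sch r).2
    · exact hfd t ht t' ht' hkey a hv
    · rw [(hsupp t ht).2 a hv, (hsupp t' ht').2 a hv]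

section Semantics

variable [Inhabited D] [CommRing E] [Algebra ℝ E] {I : Rl → Table A D E}

theorem finite_sem (hI : ∀ r, (I r).Finite) (q : Query A D Rl) : (sem I q).Finite := by
  induction q with
  | rel r => exact hI r
  | sel _ _ ih => exact ih.subset (Set.sep_subset _ _)
  | proj _ _ ih => exact ih.image _
  | join K₁ K₂ V₁ q₁ q₂ ih₁ ih₂ =>
    refine ((ih₁.prod ih₂).image fun p : _ × _ =>
      ((fun a => if a ∈ K₁ then p.1.1 a else p.2.1 a),
        fun a => if a ∈ V₁ then p.1.2 a else p.2.2 a)).subset ?_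
    rintro _ ⟨r, hr, s, hs, -, rfl⟩
    exact ⟨(r, s), ⟨hr, hs⟩, rfl⟩
  | dunion _ _ _ _ _ ih₁ ih₂ => exact (ih₁.image _).union (ih₂.image _)
  | diff _ _ _ ih₁ => exact ih₁.subset (Set.sep_subset _ _)
  | ren _ _ ih => exact ih.image _
  | derive _ _ _ ih => exact ih.image _
  | agg _ _ _ ih =>
    exact (ih.image _).subset fun _ ⟨t, ht, hp⟩ => ⟨t, ht, hp.symm⟩

theorem keyed_sem_join {q₁ q₂ : Query A D Rl} {K₁ K₂ V₁ : Set A}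
    (h₁ : Keyed (sem I q₁) K₁) (h₂ : Keyed (sem I q₂) K₂) :
    Keyed (sem I (.join K₁ K₂ V₁ q₁ q₂)) (K₁ ∪ K₂) := by
  rintro _ ⟨r, hr, s, hs, hrs, rfl⟩ _ ⟨r', hr', s', hs', hrs', rfl⟩ hk
  have hk' : ∀ a ∈ K₁ ∪ K₂, (if a ∈ K₁ then r.1 a else s.1 a)
      = if a ∈ K₁ then r'.1 a else s'.1 a := hk
  obtain rfl : r = r' := h₁ r hr r' hr' fun a ha => by simpa [ha] using hk' a (.inl ha)
  obtain rfl : s = s' := h₂ s hs s' hs' fun a ha => by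
    by_cases ha₁ : a ∈ K₁
    · rw [← hrs a ha₁ ha, ← hrs' a ha₁ ha]
    · simpa [ha₁] using hk' a (.inr ha)
  rfl

-- Tuples from different branches differ at the discriminating attribute `B`.
theorem keyed_sem_dunion {q₁ q₂ : Query A D Rl} {K : Set A} {B : A}
    {d₀ d₁ : D} (hB : B ∉ K) (hd : d₀ ≠ d₁)
    (h₁ : Keyed (sem I q₁) K) (h₂ : Keyed (sem I q₂) K) :
    Keyed (sem I (.dunion B d₀ d₁ q₁ q₂)) (K ∪ {B}) := by
  have hkeys : ∀ (d : D) (t t' : (A → D) × (A → E)),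
      (∀ a ∈ K ∪ {B}, Function.update t.1 B d a = Function.update t'.1 B d a) →
      ∀ a ∈ K, t.1 a = t'.1 a := fun d t t' hk a ha => by
    simpa [Function.update_of_ne (ne_of_mem_of_not_mem ha hB)] using hk a (.inl ha)
  have hd' : ∀ (t t' : (A → D) × (A → E)),
      ¬ ∀ a ∈ K ∪ {B}, Function.update t.1 B d₀ a = Function.update t'.1 B d₁ a :=
    fun t t' hk => hd (by simpa using hk B (.inr rfl))
  rintro _ (⟨t, ht, rfl⟩ | ⟨t, ht, rfl⟩) _ (⟨t', ht', rfl⟩ | ⟨t', ht', rfl⟩) hk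
  · rw [h₁ t ht t' ht' (hkeys d₀ t t' hk)]
  · exact (hd' t t' hk).elim
  · exact (hd' t' t fun a ha => (hk a ha).symm).elim
  · rw [h₂ t ht t' ht' (hkeys d₁ t t' hk)]

theorem keyed_sem_agg (q : Query A D Rl) (K' V' : Set A) :
    Keyed (sem I (.agg K' V' q)) K' := by
  rintro _ ⟨t, -, rfl⟩ _ ⟨t', -, rfl⟩ hk
  have hkk : ∀ b ∈ K', t.1 b = t'.1 b := fun b hb => by simpa [hb] using hk b hb
  have hgroup : {s ∈ sem I q | ∀ b ∈ K', s.1 b = t.1 b}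
      = {s ∈ sem I q | ∀ b ∈ K', s.1 b = t'.1 b} := by
    ext s
    exact and_congr_right fun _ => forall₂_congr fun b hb => by rw [hkk b hb]
  refine Prod.ext (funext fun a => ?_) (funext fun a => ?_)
  · by_cases ha : a ∈ K' <;> simp [ha, hkk]
  · simp only [hgroup]

theorem keyed_sem [DecidableEq A] {Sch : Rl → Set A × Set A}
    (hI : ∀ r, Keyed (I r) (Sch r).1) {q : Query A D Rl} {K V : Set A}
    (hWF : WF Sch q K V) : Keyed (sem I q) K := by
  induction hWF with
  | rel r => exact hI r
  | sel _ _ ih => exact ih.mono (Set.sep_subset _ _)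
  | proj _ _ _ ih => exact ih.image fun _ _ hk => hk
  | join _ _ _ _ _ ih₁ ih₂ => exact keyed_sem_join ih₁ ih₂
  | dunion _ _ _ _ _ hB hd ih₁ ih₂ =>
    exact keyed_sem_dunion (fun h => hB (.inl h)) hd ih₁ ih₂
  | diff _ _ ih₁ => exact ih₁.mono (Set.sep_subset _ _)
  | ren σ _ ih => exact ih.image fun _ _ hk a ha => by simpa using hk (σ.symm a) ⟨a, ha, rfl⟩
  | derive _ _ _ _ _ ih => exact ih.image fun _ _ hk => hk
  | @agg q _ _ K' V' => exact keyed_sem_agg q K' V'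

end Semantics

def mapRow (f : E → E') (t : (A → D) × (A → E)) : (A → D) × (A → E') :=
  (t.1, fun a => f (t.2 a))

theorem gMap_eq_image_mapRow (h : X → ℝ) (T : Table A D (MvPolynomial X ℝ)) :
    gMap h T = mapRow (MvPolynomial.aeval h) '' T :=
  rfl

theorem sep_image_mapRow (f : E → E') (S : Table A D E) (P : (A → D) → Prop) :
    {t ∈ mapRow f '' S | P t.1} = mapRow f '' {t ∈ S | P t.1} :=
  (Set.image_inter_preimage _ _ _).symm

theorem Keyed.injOn_mapRow {S : Table A D E} {K : Set A} (hS : Keyed S K) (f : E → E') :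
    Set.InjOn (mapRow f) S :=
  fun t ht t' ht' h => hS t ht t' ht' fun a _ => congrFun (congrArg Prod.fst h) a

section Grounding

variable [CommRing E] [Algebra ℝ E] [CommRing E'] [Algebra ℝ E'] (φ : E →ₐ[ℝ] E')

theorem finsum_mem_image_mapRow {G : Table A D E} {K : Set A} (hG : G.Finite)
    (hkey : Keyed G K) (a : A) :
    ∑ᶠ s ∈ mapRow φ '' G, s.2 a = φ (∑ᶠ s ∈ G, s.2 a) := by
  rw [finsum_mem_image (hkey.injOn_mapRow φ)]
  exact (φ.toAddMonoidHom.map_finsum_mem (fun s => s.2 a) hG).symm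

variable [Inhabited D] {I : Rl → Table A D E} {J : Rl → Table A D E'}

theorem sem_derive_eq_image_mapRow {q : Query A D Rl} {B : A} {e : MvPolynomial A ℝ}
    (hq : sem J q = mapRow φ '' sem I q) :
    sem J (.derive B e q) = mapRow φ '' sem I (.derive B e q) := by
  simp only [sem, hq, Set.image_image]
  refine Set.image_congr fun t _ => ?_
  simp only [mapRow, Prod.mk.injEq, true_and, ← MvPolynomial.comp_aeval_apply]
  exact (Function.comp_update φ t.2 B _).symm

theorem sem_join_eq_image_mapRow {q₁ q₂ : Query A D Rl} {K₁ K₂ V₁ : Set A}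
    (h₁ : sem J q₁ = mapRow φ '' sem I q₁) (h₂ : sem J q₂ = mapRow φ '' sem I q₂) :
    sem J (.join K₁ K₂ V₁ q₁ q₂) = mapRow φ '' sem I (.join K₁ K₂ V₁ q₁ q₂) := by
  have hrow : ∀ r s : (A → D) × (A → E),
      (((fun a => if a ∈ K₁ then r.1 a else s.1 a),
        fun a => if a ∈ V₁ then φ (r.2 a) else φ (s.2 a)) : (A → D) × (A → E'))
      = mapRow φ ((fun a => if a ∈ K₁ then r.1 a else s.1 a),
          fun a => if a ∈ V₁ then r.2 a else s.2 a) := fun r s => by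
    simp only [mapRow, apply_ite φ]
  simp only [sem, h₁, h₂]
  ext u
  constructor
  · rintro ⟨_, ⟨r, hr, rfl⟩, _, ⟨s, hs, rfl⟩, hrs, rfl⟩
    exact ⟨_, ⟨r, hr, s, hs, hrs, rfl⟩, (hrow r s).symm⟩
  · rintro ⟨_, ⟨r, hr, s, hs, hrs, rfl⟩, rfl⟩
    exact ⟨_, ⟨r, hr, rfl⟩, _, ⟨s, hs, rfl⟩, hrs, (hrow r s).symm⟩

theorem sem_diff_eq_image_mapRow {q₁ q₂ : Query A D Rl} {K : Set A}
    (h₁ : sem J q₁ = mapRow φ '' sem I q₁) (h₂ : sem J q₂ = mapRow φ '' sem I q₂) :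
    sem J (.diff K q₁ q₂) = mapRow φ '' sem I (.diff K q₁ q₂) := by
  simp only [sem, h₁, h₂]
  ext u
  constructor
  · rintro ⟨⟨t, ht, rfl⟩, hnot⟩
    exact ⟨t, ⟨ht, fun ⟨s, hs, hts⟩ => hnot ⟨mapRow φ s, ⟨s, hs, rfl⟩, hts⟩⟩, rfl⟩
  · rintro ⟨t, ⟨ht, hnot⟩, rfl⟩
    exact ⟨⟨t, ht, rfl⟩, fun ⟨_, ⟨s, hs, rfl⟩, hts⟩ => hnot ⟨s, hs, hts⟩⟩

-- Aggregation is the one operator that needs the invariants: grounding must not merge the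
-- tuples of a group, and the group sums must be finite for `φ` to commute with them.
theorem sem_agg_eq_image_mapRow {q : Query A D Rl} {K K' V' : Set A}
    (hq : sem J q = mapRow φ '' sem I q) (hfin : (sem I q).Finite) (hkey : Keyed (sem I q) K) :
    sem J (.agg K' V' q) = mapRow φ '' sem I (.agg K' V' q) := by
  have hrow : ∀ t : (A → D) × (A → E),
      (((fun a => if a ∈ K' then t.1 a else default),
        fun a => if a ∈ V' then
          ∑ᶠ s ∈ {s ∈ mapRow φ '' sem I q | ∀ b ∈ K', s.1 b = t.1 b}, s.2 a else 0)
        : (A → D) × (A → E'))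
      = mapRow φ ((fun a => if a ∈ K' then t.1 a else default),
          fun a => if a ∈ V' then
            ∑ᶠ s ∈ {s ∈ sem I q | ∀ b ∈ K', s.1 b = t.1 b}, s.2 a else 0) := fun t => by
    have hgroup : {s ∈ mapRow φ '' sem I q | ∀ b ∈ K', s.1 b = t.1 b}
        = mapRow φ '' {s ∈ sem I q | ∀ b ∈ K', s.1 b = t.1 b} :=
      sep_image_mapRow φ _ fun k => ∀ b ∈ K', k b = t.1 b
    simp only [mapRow, apply_ite φ, map_zero, hgroup,
      finsum_mem_image_mapRow φ (hfin.subset (Set.sep_subset _ _))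
        (hkey.mono (Set.sep_subset _ _))]
  simp only [sem, hq]
  ext u
  constructor
  · rintro ⟨_, ⟨t, ht, rfl⟩, rfl⟩
    exact ⟨_, ⟨t, ht, rfl⟩, (hrow t).symm⟩
  · rintro ⟨_, ⟨t, ht, rfl⟩, rfl⟩
    exact ⟨mapRow φ t, ⟨t, ht, rfl⟩, (hrow t).symm⟩

theorem sem_image_mapRow [DecidableEq A] {Sch : Rl → Set A × Set A}
    (hfin : ∀ r, (I r).Finite) (hkey : ∀ r, Keyed (I r) (Sch r).1)
    {q : Query A D Rl} {K V : Set A} (hWF : WF Sch q K V) :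
    sem (fun r => mapRow φ '' I r) q = mapRow φ '' sem I q := by
  induction hWF with
  | rel r => rfl
  | sel _ _ ih =>
    simp only [sem, ih]
    exact sep_image_mapRow _ _ _
  | proj _ _ _ ih =>
    simp only [sem, ih, Set.image_image]
    refine Set.image_congr fun t _ => ?_
    simp only [mapRow, apply_ite φ, map_zero]
  | join _ _ _ _ _ ih₁ ih₂ => exact sem_join_eq_image_mapRow φ ih₁ ih₂
  | dunion _ _ _ _ _ _ _ ih₁ ih₂ =>
    simp only [sem, ih₁, ih₂, Set.image_union, Set.image_image]
    rfl
  | diff _ _ ih₁ ih₂ => exact sem_diff_eq_image_mapRow φ ih₁ ih₂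
  | ren _ _ ih =>
    simp only [sem, ih, Set.image_image]
    rfl
  | derive _ _ _ _ _ ih => exact sem_derive_eq_image_mapRow φ ih
  | agg _ _ hq _ _ ih =>
    exact sem_agg_eq_image_mapRow φ ih (finite_sem hfin _) (keyed_sem hkey hq)

end Grounding

/-- for any well-formed query `q` and any valid s-instance `I`
over globally scoped variables `X`, the set of ground query results over all
valuations equals the set of groundings of the symbolic result:
`q⟦I⟧ = ⟦q(I)⟧`. -/
theorem symbolic_evaluation_correct [Inhabited D] [DecidableEq A]
    (Sch : Rl → Set A × Set A) (q : Query A D Rl) (K V : Set A)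
    (I : Rl → Table A D (MvPolynomial X ℝ))
    (hWF : WF Sch q K V) (hI : ValidInst Sch I) :
    {T : Table A D ℝ | ∃ h : X → ℝ, T = sem (fun r => gMap h (I r)) q}
      = {T : Table A D ℝ | ∃ h : X → ℝ, T = gMap h (sem I q)} := by
  have hcomm : ∀ h : X → ℝ, sem (fun r => gMap h (I r)) q = gMap h (sem I q) := fun h => by
    simp only [gMap_eq_image_mapRow]
    exact sem_image_mapRow _ (fun r => (hI r).1) hI.keyed hWF
  simp only [hcomm]

end Eris
end

section
/- Coalescing soundness: let R : K ∪ {D} ▷ V be a linear s-table, and let κ_D(R, φ) = (T, φ ∧ ψ) be the coalescing construction that, for each group of tuples agreeing on K\{D} but differing on D (the set R⁺), replaces each value attribute Bᵢ with a fresh variable L_{k,Bᵢ} and adds equations L_{k,Bᵢ} = t[Bᵢ] for every t ∈ R⁺ in the group, keeping tuples of R \ R⁺ unchanged. Then for every valuation h : X ∪ L → ℝ satisfying φ ∧ ψ, the ground table h(T) satisfies the FD K\{D} → V and equals the projection π̂_D(h(R)); conversely, every valuation h of X satisfying φ such that π̂_D(h(R)) satisfies K\{D} → V extends to a valuation of the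 L-variables satisfying ψ with h(T) = π̂_D(h(R)). -/
open scoped Classical

namespace Coalescing

variable {A D X : Type*}

/-- The functional dependency `K → V` for a ground table. -/
def FDg {A D E : Type*} (K V : Set A) (T : Set ((A → D) × (A → E))) : Prop :=
  ∀ t ∈ T, ∀ t' ∈ T, (∀ a ∈ K, t.1 a = t'.1 a) → ∀ a ∈ V, t.2 a = t'.2 a

/-- `R⁺`: the tuples of `R` for which some other tuple agrees on `K \ {Dd}`
but differs on the discriminant `Dd`. -/
def Rplus (K : Set A) (Dd : A) (R : Set ((A → D) × (A → MvPolynomial X ℝ))) :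
    Set ((A → D) × (A → MvPolynomial X ℝ)) :=
  {t ∈ R | ∃ t' ∈ R, (∀ a ∈ K \ {Dd}, t.1 a = t'.1 a) ∧ t.1 Dd ≠ t'.1 Dd}

/-- The coalesced s-table `T`: tuples of `R⁺` get fresh LLUN variables
`L_{t[K\{Dd}],a}` in every value attribute, tuples of `R \ R⁺` keep their
values; the discriminant key attribute `Dd` is projected away (reset to the
default key value). -/
noncomputable def coalT [Inhabited D] (K V : Set A) (Dd : A)
    (Lvar : (A → D) → A → X)
    (R : Set ((A → D) × (A → MvPolynomial X ℝ))) :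
    Set ((A → D) × (A → MvPolynomial X ℝ)) :=
  (fun t : (A → D) × (A → MvPolynomial X ℝ) =>
      (Function.update t.1 Dd (default : D),
       fun a => if a ∈ V then (MvPolynomial.X (Lvar t.1 a) : MvPolynomial X ℝ) else 0)) ''
    Rplus K Dd R ∪
  (fun t : (A → D) × (A → MvPolynomial X ℝ) =>
      (Function.update t.1 Dd (default : D),
       fun a => if a ∈ V then t.2 a else 0)) '' (R \ Rplus K Dd R)

/-- The constraint `ψ`: each LLUN variable equals the observed symbolic value. -/
def psi (K V : Set A) (Dd : A) (Lvar : (A → D) → A → X)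
    (R : Set ((A → D) × (A → MvPolynomial X ℝ))) (h : X → ℝ) : Prop :=
  ∀ t ∈ Rplus K Dd R, ∀ a ∈ V, h (Lvar t.1 a) = MvPolynomial.eval h (t.2 a)

/-- Grounding of a symbolic table by a valuation. -/
noncomputable def gMap (h : X → ℝ)
    (T : Set ((A → D) × (A → MvPolynomial X ℝ))) : Set ((A → D) × (A → ℝ)) :=
  (fun t : (A → D) × (A → MvPolynomial X ℝ) =>
    (t.1, fun a => MvPolynomial.eval h (t.2 a))) '' T

/-- `π̂_D(h(R))`: ground `R` by `h` and project away the discriminant key. -/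
noncomputable def projD [Inhabited D] (V : Set A) (Dd : A) (h : X → ℝ)
    (R : Set ((A → D) × (A → MvPolynomial X ℝ))) : Set ((A → D) × (A → ℝ)) :=
  (fun t : (A → D) × (A → MvPolynomial X ℝ) =>
    (Function.update t.1 Dd (default : D),
     fun a => if a ∈ V then MvPolynomial.eval h (t.2 a) else 0)) '' R

/-!
Under `ψ` each shared variable `L_{k,B}` evaluates to `t[B]` for every tuple `t` of its group,
so grounding `T` gives `π̂_D(h(R))`; the FD holds there because two tuples agreeing on `K \ {D}`
either agree on all of `K` (FD of `R`) or lie in one group of `R⁺` and share their variables.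
Conversely, if `π̂_D(h(R))` satisfies the FD, the tuples of a group agree on `V` under `h`, so
setting `L_{k,B}` to that common value is well defined (`Lvar` is injective); by freshness this
changes neither `φ` nor `h(R)`.
-/

section

variable {K V : Set A} {Dd : A} {Lvar : (A → D) → A → X}
  {R : Set ((A → D) × (A → MvPolynomial X ℝ))}

theorem Rplus_subset : Rplus K Dd R ⊆ R := fun _ ht => ht.1

theorem update_agree_iff {k k' : A → D} {d : D} :
    (∀ a ∈ K \ {Dd}, Function.update k Dd d a = Function.update k' Dd d a) ↔
      ∀ a ∈ K \ {Dd}, k a = k' a := by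
  refine forall₂_congr fun a ha => ?_
  rw [Function.update_of_ne ha.2, Function.update_of_ne ha.2]

theorem gMap_coalT_eq_projD [Inhabited D] {h : X → ℝ} (hψ : psi K V Dd Lvar R h) :
    gMap h (coalT K V Dd Lvar R) = projD V Dd h R := by
  have hplus : ∀ t ∈ Rplus K Dd R, ∀ a,
      MvPolynomial.eval h (if a ∈ V then MvPolynomial.X (Lvar t.1 a) else 0) =
        if a ∈ V then MvPolynomial.eval h (t.2 a) else 0 := by
    intro t ht a
    split_ifs with ha
    · rw [MvPolynomial.eval_X, hψ t ht a ha]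
    · exact map_zero _
  have hrest : ∀ t : (A → D) × (A → MvPolynomial X ℝ), ∀ a,
      MvPolynomial.eval h (if a ∈ V then t.2 a else 0) =
        if a ∈ V then MvPolynomial.eval h (t.2 a) else 0 := fun t a => by
    split_ifs <;> simp
  unfold gMap coalT projD
  rw [Set.image_union, Set.image_image, Set.image_image,
    Set.image_congr fun t ht => congrArg _ (funext (hplus t ht)),
    Set.image_congr fun t _ => congrArg _ (funext (hrest t)),
    ← Set.image_union, Set.union_sdiff_cancel Rplus_subset]

theorem fdg_projD_of_psi [Inhabited D] {h : X → ℝ}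
    (hFD : ∀ t ∈ R, ∀ t' ∈ R, (∀ a ∈ K, t.1 a = t'.1 a) → ∀ a ∈ V, t.2 a = t'.2 a)
    (hLkey : ∀ k k' : A → D, (∀ a ∈ K \ {Dd}, k a = k' a) → ∀ b : A, Lvar k b = Lvar k' b)
    (hψ : psi K V Dd Lvar R h) :
    FDg (K \ {Dd}) V (projD V Dd h R) := by
  rintro _ ⟨t, ht, rfl⟩ _ ⟨t', ht', rfl⟩ hkey a ha
  rw [update_agree_iff] at hkey
  simp only [if_pos ha]
  by_cases hD : t.1 Dd = t'.1 Dd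
  · have hK : ∀ b ∈ K, t.1 b = t'.1 b := fun b hb => by
      rcases eq_or_ne b Dd with rfl | hbD
      exacts [hD, hkey b ⟨hb, hbD⟩]
    rw [hFD t ht t' ht' hK a ha]
  · have htp : t ∈ Rplus K Dd R := ⟨ht, t', ht', hkey, hD⟩
    have htp' : t' ∈ Rplus K Dd R :=
      ⟨ht', t, ht, fun b hb => (hkey b hb).symm, Ne.symm hD⟩
    rw [← hψ t htp a ha, ← hψ t' htp' a ha, hLkey t.1 t'.1 hkey a]

theorem eval_eq_of_fdg_projD [Inhabited D] {h : X → ℝ} (hfd : FDg (K \ {Dd}) V (projD V Dd h R))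
    {t t' : (A → D) × (A → MvPolynomial X ℝ)} (ht : t ∈ R) (ht' : t' ∈ R)
    (hkey : ∀ a ∈ K \ {Dd}, t.1 a = t'.1 a) {a : A} (ha : a ∈ V) :
    MvPolynomial.eval h (t.2 a) = MvPolynomial.eval h (t'.2 a) := by
  simpa [if_pos ha] using hfd _ ⟨t, ht, rfl⟩ _ ⟨t', ht', rfl⟩ (update_agree_iff.2 hkey) a ha

theorem projD_congr [Inhabited D] {h h' : X → ℝ}
    (hR : ∀ t ∈ R, ∀ a, MvPolynomial.eval h (t.2 a) = MvPolynomial.eval h' (t.2 a)) :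
    projD V Dd h R = projD V Dd h' R := by
  unfold projD
  exact Set.image_congr fun t ht => by simp only [hR t ht]

end

noncomputable def extendL [Inhabited D] (K V : Set A) (Dd : A) (Lvar : (A → D) → A → X)
    (R : Set ((A → D) × (A → MvPolynomial X ℝ))) (h : X → ℝ) : X → ℝ :=
  Function.extend (fun q : ↥(Rplus K Dd R ×ˢ V) => Lvar q.1.1.1 q.1.2)
    (fun q => MvPolynomial.eval h (q.1.1.2 q.1.2)) h

section

variable {K V : Set A} {Dd : A} {Lvar : (A → D) → A → X}
  {R : Set ((A → D) × (A → MvPolynomial X ℝ))} {h : X → ℝ}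

theorem extendL_apply_of_forall_ne [Inhabited D] {x : X} (hx : ∀ k b, x ≠ Lvar k b) :
    extendL K V Dd Lvar R h x = h x :=
  Function.extend_apply' _ _ _ fun ⟨_, hq⟩ => hx _ _ hq.symm

theorem eval_eq_of_eq_off_Lvar {h' : X → ℝ}
    (hfresh : ∀ t ∈ R, ∀ a : A, ∀ k : A → D, ∀ b : A, Lvar k b ∉ (t.2 a).vars)
    (hoff : ∀ x : X, (∀ k : A → D, ∀ b : A, x ≠ Lvar k b) → h' x = h x)
    {t : (A → D) × (A → MvPolynomial X ℝ)} (ht : t ∈ R) (a : A) :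
    MvPolynomial.eval h' (t.2 a) = MvPolynomial.eval h (t.2 a) :=
  MvPolynomial.eval₂Hom_congr' rfl
    (fun x hx _ => hoff x fun k b hxk => hfresh t ht a k b (hxk ▸ hx)) rfl

theorem factorsThrough_of_fdg_projD [Inhabited D]
    (hLinj : ∀ k k' : A → D, ∀ b b' : A,
      Lvar k b = Lvar k' b' → b = b' ∧ ∀ a ∈ K \ {Dd}, k a = k' a)
    (hfd : FDg (K \ {Dd}) V (projD V Dd h R)) :
    Function.FactorsThrough (fun q : ↥(Rplus K Dd R ×ˢ V) => MvPolynomial.eval h (q.1.1.2 q.1.2))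
      (fun q => Lvar q.1.1.1 q.1.2) := by
  intro ⟨⟨t, a⟩, ht, ha⟩ ⟨⟨t', a'⟩, ht', _⟩ hL
  obtain ⟨rfl, hkey⟩ := hLinj _ _ _ _ hL
  exact eval_eq_of_fdg_projD hfd ht.1 ht'.1 hkey ha

theorem psi_extendL [Inhabited D]
    (hLinj : ∀ k k' : A → D, ∀ b b' : A,
      Lvar k b = Lvar k' b' → b = b' ∧ ∀ a ∈ K \ {Dd}, k a = k' a)
    (hfresh : ∀ t ∈ R, ∀ a : A, ∀ k : A → D, ∀ b : A, Lvar k b ∉ (t.2 a).vars)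
    (hfd : FDg (K \ {Dd}) V (projD V Dd h R)) :
    psi K V Dd Lvar R (extendL K V Dd Lvar R h) := by
  intro t ht a ha
  rw [eval_eq_of_eq_off_Lvar hfresh (fun _ => extendL_apply_of_forall_ne) ht.1]
  exact (factorsThrough_of_fdg_projD hLinj hfd).extend_apply h ⟨(t, a), ht, ha⟩

end

theorem coalescing_soundness_general [Inhabited D]
    (K V : Set A) (Dd : A)
    (R : Set ((A → D) × (A → MvPolynomial X ℝ)))
    (hFD : ∀ t ∈ R, ∀ t' ∈ R, (∀ a ∈ K, t.1 a = t'.1 a) → ∀ a ∈ V, t.2 a = t'.2 a)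
    (Lvar : (A → D) → A → X)
    (hLkey : ∀ k k' : A → D, (∀ a ∈ K \ {Dd}, k a = k' a) → ∀ b : A, Lvar k b = Lvar k' b)
    (hLinj : ∀ k k' : A → D, ∀ b b' : A,
      Lvar k b = Lvar k' b' → b = b' ∧ ∀ a ∈ K \ {Dd}, k a = k' a)
    (hfresh : ∀ t ∈ R, ∀ a : A, ∀ k : A → D, ∀ b : A, Lvar k b ∉ (t.2 a).vars)
    (φ : (X → ℝ) → Prop)
    (hφL : ∀ h h' : X → ℝ,
      (∀ x : X, (∀ k : A → D, ∀ b : A, x ≠ Lvar k b) → h x = h' x) → (φ h ↔ φ h')) :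
    (∀ h : X → ℝ, φ h → psi K V Dd Lvar R h →
      FDg (K \ {Dd}) V (gMap h (coalT K V Dd Lvar R)) ∧
      gMap h (coalT K V Dd Lvar R) = projD V Dd h R) ∧
    (∀ h : X → ℝ, φ h → FDg (K \ {Dd}) V (projD V Dd h R) →
      ∃ h' : X → ℝ,
        (∀ x : X, (∀ k : A → D, ∀ b : A, x ≠ Lvar k b) → h' x = h x) ∧
        φ h' ∧ psi K V Dd Lvar R h' ∧
        gMap h' (coalT K V Dd Lvar R) = projD V Dd h R) := by
  refine ⟨fun h _ hψ => ?_, fun h hφ hfd => ?_⟩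
  · rw [gMap_coalT_eq_projD hψ]
    exact ⟨fdg_projD_of_psi hFD hLkey hψ, rfl⟩
  · have hoff : ∀ x : X, (∀ k b, x ≠ Lvar k b) → extendL K V Dd Lvar R h x = h x :=
      fun _ => extendL_apply_of_forall_ne
    have hψ' := psi_extendL hLinj hfresh hfd
    refine ⟨_, hoff, (hφL _ h hoff).2 hφ, hψ', ?_⟩
    rw [gMap_coalT_eq_projD hψ', projD_congr fun t ht => eval_eq_of_eq_off_Lvar hfresh hoff ht]

/-- soundness of coalescing `κ_D(R, φ) = (T, φ ∧ ψ)` for a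
linear s-table `R : K ▷ V` with discriminant `Dd ∈ K`, fresh LLUN variables
`Lvar` (depending only on the `K \ {Dd}` part of the key, injective, and not
occurring in `R` nor in `φ`): every valuation satisfying `φ ∧ ψ` grounds `T`
to a table satisfying the FD `K \ {Dd} → V` and equal to `π̂_D(h(R))`;
conversely every valuation `h` satisfying `φ` for which `π̂_D(h(R))`
satisfies `K \ {Dd} → V` extends (changing it only on LLUN variables) to a
valuation satisfying `φ ∧ ψ` that grounds `T` to `π̂_D(h(R))`. -/
theorem coalescing_soundness [Inhabited D] [DecidableEq X]
    (K V : Set A) (Dd : A) (hDd : Dd ∈ K) (hKV : Disjoint K V)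
    (R : Set ((A → D) × (A → MvPolynomial X ℝ)))
    (hFD : ∀ t ∈ R, ∀ t' ∈ R, (∀ a ∈ K, t.1 a = t'.1 a) → ∀ a ∈ V, t.2 a = t'.2 a)
    (hLin : ∀ t ∈ R, ∀ a : A, (t.2 a).totalDegree ≤ 1)
    (Lvar : (A → D) → A → X)
    (hLkey : ∀ k k' : A → D, (∀ a ∈ K \ {Dd}, k a = k' a) → ∀ b : A, Lvar k b = Lvar k' b)
    (hLinj : ∀ k k' : A → D, ∀ b b' : A,
      Lvar k b = Lvar k' b' → b = b' ∧ ∀ a ∈ K \ {Dd}, k a = k' a)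
    (hfresh : ∀ t ∈ R, ∀ a : A, ∀ k : A → D, ∀ b : A, Lvar k b ∉ (t.2 a).vars)
    (φ : (X → ℝ) → Prop)
    (hφL : ∀ h h' : X → ℝ,
      (∀ x : X, (∀ k : A → D, ∀ b : A, x ≠ Lvar k b) → h x = h' x) → (φ h ↔ φ h')) :
    (∀ h : X → ℝ, φ h → psi K V Dd Lvar R h →
      FDg (K \ {Dd}) V (gMap h (coalT K V Dd Lvar R)) ∧
      gMap h (coalT K V Dd Lvar R) = projD V Dd h R) ∧
    (∀ h : X → ℝ, φ h → FDg (K \ {Dd}) V (projD V Dd h R) →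
      ∃ h' : X → ℝ,
        (∀ x : X, (∀ k : A → D, ∀ b : A, x ≠ Lvar k b) → h' x = h x) ∧
        φ h' ∧ psi K V Dd Lvar R h' ∧
        gMap h' (coalT K V Dd Lvar R) = projD V Dd h R) :=
  coalescing_soundness_general K V Dd R hFD Lvar hLkey hLinj hfresh φ hφL

end Coalescing
end
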